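/- Let p be a prime, l ≥ 1, let ψ be an additive character of ℚ_p that is trivial on pℤ_p but nontrivial on ℤ_p, and let s = (s₁, …, s_{2l}) ∈ ℤ_p^{2l}. Then λ_s(θ(g)) = λ_s(g) for every g in the pro-unipotent Iwahori subgroup I⁺ of GL_{2l}(ℤ_p) if and only if s_i + s_{2l−i} ∈ pℤ_p for every 1 ≤ i ≤ l−1. -/

import Mathlib

/-- The pro-unipotent Iwahori subgroup `I⁺` of `GL_n(ℤ_p)`: invertible matrices over `ℤ_p`
whose diagonal entries are `≡ 1 mod p` and whose below-diagonal entries are `≡ 0 mod p`. -/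
def IwahoriPlus (p : ℕ) [Fact p.Prime] (n : ℕ) (g : Matrix (Fin n) (Fin n) ℤ_[p]) : Prop :=
  IsUnit g.det ∧ (∀ i : Fin n, (p : ℤ_[p]) ∣ (g i i - 1)) ∧
    ∀ i j : Fin n, (j : ℕ) < (i : ℕ) → (p : ℤ_[p]) ∣ g i j

/-- The affine generic character `λ_s(g) = ψ(s₁g₁₂ + ⋯ + s_{n−1}g_{n−1,n} + s_n p⁻¹ g_{n,1})`
attached to `s ∈ ℤ_p^n` and an additive character `ψ` of `ℚ_p`. -/
noncomputable def affineChar (p : ℕ) [Fact p.Prime] (n : ℕ) (hn : 2 ≤ n)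
    (ψ : AddChar ℚ_[p] ℂˣ) (s : Fin n → ℤ_[p]) (g : Matrix (Fin n) (Fin n) ℤ_[p]) : ℂˣ :=
  ψ ((∑ i : Fin (n - 1),
        ((s ⟨i, by have := i.isLt; omega⟩ : ℚ_[p]) *
          ((g ⟨i, by have := i.isLt; omega⟩ ⟨(i : ℕ) + 1, by have := i.isLt; omega⟩ : ℤ_[p]) :
            ℚ_[p]))) +
      (s ⟨n - 1, by omega⟩ : ℚ_[p]) * ((p : ℚ_[p]))⁻¹ *
        ((g ⟨n - 1, by omega⟩ ⟨0, by omega⟩ : ℤ_[p]) : ℚ_[p]))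

/-- The `2l × 2l` anti-diagonal matrix `J′` whose `(i, 2l+1−i)` entry is `1` for `i ≤ l`
and `−1` for `i > l` (1-based indexing). -/
noncomputable def Jmat (p : ℕ) [Fact p.Prime] (l : ℕ) :
    Matrix (Fin (2 * l)) (Fin (2 * l)) ℤ_[p] :=
  Matrix.of fun i j =>
    if (i : ℕ) + (j : ℕ) = 2 * l - 1 then (if (i : ℕ) < l then 1 else -1) else 0

/-- The involution `θ(g) = J′⁻¹ · ᵗg⁻¹ · J′` of `GL_{2l}`. -/
noncomputable def thetaInv (p : ℕ) [Fact p.Prime] (l : ℕ)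
    (g : Matrix (Fin (2 * l)) (Fin (2 * l)) ℤ_[p]) :
    Matrix (Fin (2 * l)) (Fin (2 * l)) ℤ_[p] :=
  (Jmat p l)⁻¹ * Matrix.transpose g⁻¹ * Jmat p l


/-
Reduced modulo `p`, every `g ∈ I⁺` is upper unitriangular, and so is `g⁻¹`. Comparing entries
of `g g⁻¹ = 1` gives `(g⁻¹)_{i,i+1} ≡ -g_{i,i+1} (mod p)` and `(g⁻¹)_{2l,1} ≡ -g_{2l,1} (mod p²)`.
Since `θ(g)_{ij} = ε_i ε_j (g⁻¹)_{2l+1-j, 2l+1-i}` with `ε_i = ±1` the signs of `J′`, this yields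
`λ_s(θ g) = λ_s(g) ψ(-∑ d_i g_{i,i+1})`, where `d_i = s_i + ε_i ε_{i+1} s_{2l-i}`; the sign
`ε_i ε_{i+1}` is `-1` only at the middle index `i = l`, where `d_l = 0`. So `λ_s` is `θ`-invariant
as soon as every `d_i ∈ pℤ_p`. Conversely, on the transvection `1 + x E_{i,i+1}` invariance says
`ψ(d_i x) = 1` for all `x ∈ ℤ_p`, which forces `d_i ∈ pℤ_p` because `ψ` is nontrivial on `ℤ_p`.
-/

namespace Matrix

variable {m : Type*} [LinearOrder m]

def IsUpperUnitriangular {S : Type*} [Semiring S] (A : Matrix m m S) : Prop :=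
  A.BlockTriangular id ∧ ∀ i, A i i = 1

lemma BlockTriangular.mul_apply_self [Fintype m] {S : Type*} [Semiring S] {A B : Matrix m m S}
    (hA : A.BlockTriangular id) (hB : B.BlockTriangular id) (i : m) :
    (A * B) i i = A i i * B i i := by
  rw [mul_apply, Fintype.sum_eq_single i]
  intro k hk
  rcases hk.lt_or_gt with hki | hik
  · rw [hA hki, zero_mul]
  · rw [hB hik, mul_zero]

namespace IsUpperUnitriangular

lemma mul_apply_of_covBy [Fintype m] {S : Type*} [Semiring S] {A B : Matrix m m S}
    (hA : A.IsUpperUnitriangular) (hB : B.IsUpperUnitriangular) {i j : m} (hij : i ⋖ j) :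
    (A * B) i j = A i j + B i j := by
  rw [mul_apply, Fintype.sum_eq_add i j hij.lt.ne, hA.2, hB.2, one_mul, mul_one, add_comm]
  rintro k ⟨hki, hkj⟩
  rcases hki.lt_or_gt with hki | hik
  · rw [hA.1 hki, zero_mul]
  · rw [hB.1 (lt_of_le_of_ne (hij.ge_of_gt hik) (Ne.symm hkj)), mul_zero]

lemma of_mul_eq_one [Fintype m] [DecidableEq m] {S : Type*} [CommRing S] {B C : Matrix m m S}
    (hB : B.IsUpperUnitriangular) (hCB : C * B = 1) : C.IsUpperUnitriangular := by
  let := invertibleOfLeftInverse B C hCB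
  have hC : C.BlockTriangular id :=
    inv_eq_left_inv hCB ▸ blockTriangular_inv_of_blockTriangular hB.1
  refine ⟨hC, fun i => ?_⟩
  simpa [hB.2, hCB] using (hC.mul_apply_self hB.1 i).symm

end IsUpperUnitriangular

variable {R : Type*} [CommRing R]

def IsUnitriangularMod (I : Ideal R) (A : Matrix m m R) : Prop :=
  (A.map (Ideal.Quotient.mk I)).IsUpperUnitriangular

namespace IsUnitriangularMod

variable {I : Ideal R} {A B : Matrix m m R}

lemma apply_mem_of_lt (hA : A.IsUnitriangularMod I) {i j : m} (hji : j < i) : A i j ∈ I :=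
  Ideal.Quotient.eq_zero_iff_mem.1 (hA.1 hji)

lemma apply_self_sub_one_mem (hA : A.IsUnitriangularMod I) (i : m) : A i i - 1 ∈ I :=
  Ideal.Quotient.eq.1 ((hA.2 i).trans (map_one _).symm)

lemma inv [Fintype m] [DecidableEq m] (hA : A.IsUnitriangularMod I) (hdet : IsUnit A.det) :
    A⁻¹.IsUnitriangularMod I :=
  hA.of_mul_eq_one <| by
    rw [← Matrix.map_mul, nonsing_inv_mul A hdet, Matrix.map_one _ (map_zero _) (map_one _)]

lemma add_inv_apply_mem_of_covBy [Fintype m] [DecidableEq m] (hA : A.IsUnitriangularMod I)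
    (hdet : IsUnit A.det) {i j : m} (hij : i ⋖ j) : A i j + A⁻¹ i j ∈ I := by
  have h := congrFun (congrFun (Matrix.map_mul (f := Ideal.Quotient.mk I) (L := A) (M := A⁻¹)) i) j
  rw [mul_nonsing_inv A hdet, hA.mul_apply_of_covBy (hA.inv hdet) hij, map_apply,
    one_apply_ne hij.lt.ne, map_zero, map_apply, map_apply, ← map_add] at h
  exact Ideal.Quotient.eq_zero_iff_mem.1 h.symm

lemma mul_apply_sub_mem_sq [Fintype m] (hA : A.IsUnitriangularMod I)
    (hB : B.IsUnitriangularMod I) {i j : m} (hi : IsTop i) (hj : IsBot j) (hji : j < i) :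
    (A * B) i j - (A i j + B i j) ∈ I ^ 2 := by
  have hrest : ∀ k, k ≠ i ∧ k ≠ j → A i k * B k j ∈ I ^ 2 := fun k ⟨hki, hkj⟩ =>
    pow_two I ▸ Ideal.mul_mem_mul (hA.apply_mem_of_lt ((hi k).lt_of_ne hki))
      (hB.apply_mem_of_lt ((hj k).lt_of_ne' hkj))
  have hsum := Ideal.sum_mem (t := (Finset.univ.erase i).erase j) _ fun k hk => hrest k
    ⟨(Finset.mem_erase.1 (Finset.mem_erase.1 hk).2).1, (Finset.mem_erase.1 hk).1⟩
  have hij : (A i i - 1) * B i j + A i j * (B j j - 1) ∈ I ^ 2 :=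
    pow_two I ▸ Ideal.add_mem _
      (Ideal.mul_mem_mul (hA.apply_self_sub_one_mem i) (hB.apply_mem_of_lt hji))
      (Ideal.mul_mem_mul (hA.apply_mem_of_lt hji) (hB.apply_self_sub_one_mem j))
  rw [mul_apply, ← Finset.add_sum_erase _ _ (Finset.mem_univ i),
    ← Finset.add_sum_erase _ _ (Finset.mem_erase.2 ⟨hji.ne, Finset.mem_univ j⟩)]
  convert Ideal.add_mem _ hij hsum using 1
  ring

lemma add_inv_apply_mem_sq [Fintype m] [DecidableEq m] (hA : A.IsUnitriangularMod I)
    (hdet : IsUnit A.det) {i j : m} (hi : IsTop i) (hj : IsBot j) (hji : j < i) :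
    A i j + A⁻¹ i j ∈ I ^ 2 := by
  have h := hA.mul_apply_sub_mem_sq (hA.inv hdet) hi hj hji
  rwa [mul_nonsing_inv A hdet, one_apply_ne hji.ne', zero_sub, neg_mem_iff] at h

end IsUnitriangularMod

lemma transvection_apply_of_le [DecidableEq m] {i j a b : m} (hij : i < j) (hba : b ≤ a) (x : R) :
    transvection i j x a b = (1 : Matrix m m R) a b := by
  rw [transvection, add_apply, single_apply, if_neg, add_zero]
  rintro ⟨rfl, rfl⟩
  exact absurd hij (not_lt.2 hba)

end Matrix

lemma AddChar.mem_maximalIdeal_of_mulShift_eq_one {R M : Type*} [CommRing R] [IsLocalRing R]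
    [CommMonoid M] {χ : AddChar R M} (hχ : χ ≠ 1) {c : R} (h : χ.mulShift c = 1) :
    c ∈ IsLocalRing.maximalIdeal R := by
  by_contra hc
  exact hχ ((χ.mulShift_unit_eq_one_iff (IsLocalRing.notMem_maximalIdeal.1 hc)).1 h)

lemma AddChar.map_eq_of_sub_eq_natCast_mul {p : ℕ} [Fact p.Prime] {ψ : AddChar ℚ_[p] ℂˣ}
    (hψ : ∀ x : ℤ_[p], ψ ((p : ℚ_[p]) * (x : ℚ_[p])) = 1) {a b : ℚ_[p]} (w : ℤ_[p])
    (h : a - b = p * w) : ψ a = ψ b := by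
  rw [← sub_add_cancel a b, h, AddChar.map_add_eq_mul, hψ, one_mul]

def superdiag {R : Type*} {n : ℕ} (A : Matrix (Fin n) (Fin n) R) (i : Fin (n - 1)) : R :=
  A ⟨i, by omega⟩ ⟨i + 1, by omega⟩

lemma superdiag_transvection {R : Type*} [CommRing R] {n : ℕ} (i : Fin (n - 1)) (x : R)
    (k : Fin (n - 1)) :
    superdiag (Matrix.transvection ⟨i, by omega⟩ ⟨i + 1, by omega⟩ x) k =
      if k = i then x else 0 := by
  simp [superdiag, Matrix.transvection, Matrix.single_apply, Fin.ext_iff, eq_comm]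

lemma Fin.rev_superdiag_row {n : ℕ} (i : Fin (n - 1)) :
    (⟨i, by omega⟩ : Fin n).rev = ⟨i.rev + 1, by omega⟩ := by
  ext; simp only [Fin.val_rev]; omega

lemma Fin.rev_superdiag_col {n : ℕ} (i : Fin (n - 1)) :
    (⟨i + 1, by omega⟩ : Fin n).rev = ⟨i.rev, by omega⟩ := by
  ext; simp only [Fin.val_rev]; omega

section IwahoriPlus

variable {p : ℕ} [Fact p.Prime] {n : ℕ} {g : Matrix (Fin n) (Fin n) ℤ_[p]}

lemma IwahoriPlus.isUnitriangularMod (hg : IwahoriPlus p n g) :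
    g.IsUnitriangularMod (Ideal.span {(p : ℤ_[p])}) :=
  ⟨fun _ _ hji => Ideal.Quotient.eq_zero_iff_mem.2 (Ideal.mem_span_singleton.2 (hg.2.2 _ _ hji)),
    fun i => (Ideal.Quotient.eq.2 (Ideal.mem_span_singleton.2 (hg.2.1 i))).trans (map_one _)⟩

lemma IwahoriPlus.dvd_superdiag_add_superdiag_inv (hg : IwahoriPlus p n g) (i : Fin (n - 1)) :
    (p : ℤ_[p]) ∣ superdiag g i + superdiag g⁻¹ i :=
  Ideal.mem_span_singleton.1 <| hg.isUnitriangularMod.add_inv_apply_mem_of_covBy hg.1 <|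
    Fin.covBy_iff.2 (Order.covBy_add_one (i : ℕ))

lemma IwahoriPlus.sq_dvd_corner_add_corner_inv (hn : 2 ≤ n) (hg : IwahoriPlus p n g) :
    (p : ℤ_[p]) ^ 2 ∣ g ⟨n - 1, by omega⟩ ⟨0, by omega⟩ + g⁻¹ ⟨n - 1, by omega⟩ ⟨0, by omega⟩ := by
  rw [← Ideal.mem_span_singleton, ← Ideal.span_singleton_pow]
  exact hg.isUnitriangularMod.add_inv_apply_mem_sq hg.1
    (fun k => Fin.le_def.2 (Nat.le_sub_one_of_lt k.2)) (fun k => Fin.le_def.2 (Nat.zero_le _))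
    (Fin.lt_def.2 (by simp; omega))

lemma IwahoriPlus.transvection {i j : Fin n} (hij : i < j) (x : ℤ_[p]) :
    IwahoriPlus p n (Matrix.transvection i j x) := by
  refine ⟨by simp [hij.ne], fun k => ?_, fun a b hba => ?_⟩
  · simp [Matrix.transvection_apply_of_le hij le_rfl]
  · simp [Matrix.transvection_apply_of_le hij (Fin.le_of_lt hba),
      Matrix.one_apply_ne (Fin.ne_of_gt hba)]

end IwahoriPlus

section AffineChar

variable {p : ℕ} [Fact p.Prime] {n : ℕ} (hn : 2 ≤ n) {ψ : AddChar ℚ_[p] ℂˣ} (s : Fin n → ℤ_[p])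

lemma affineChar_eq (g : Matrix (Fin n) (Fin n) ℤ_[p]) :
    affineChar p n hn ψ s g =
      ψ (((∑ i : Fin (n - 1), s ⟨i, by omega⟩ * superdiag g i : ℤ_[p]) : ℚ_[p]) +
        (s ⟨n - 1, by omega⟩ : ℚ_[p]) * (p : ℚ_[p])⁻¹ *
          (g ⟨n - 1, by omega⟩ ⟨0, by omega⟩ : ℚ_[p])) := by
  simp [affineChar, superdiag]

lemma affineChar_eq_mul_of_dvd (hψ : ∀ x : ℤ_[p], ψ ((p : ℚ_[p]) * (x : ℚ_[p])) = 1)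
    {g h : Matrix (Fin n) (Fin n) ℤ_[p]} (t : ℤ_[p])
    (hsuperdiag : (p : ℤ_[p]) ∣ ∑ i : Fin (n - 1), s ⟨i, by omega⟩ * superdiag h i -
      (∑ i : Fin (n - 1), s ⟨i, by omega⟩ * superdiag g i + t))
    (hcorner : (p : ℤ_[p]) ^ 2 ∣
      h ⟨n - 1, by omega⟩ ⟨0, by omega⟩ - g ⟨n - 1, by omega⟩ ⟨0, by omega⟩) :
    affineChar p n hn ψ s h = affineChar p n hn ψ s g * ψ t := by
  obtain ⟨u, hu⟩ := hsuperdiag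
  obtain ⟨v, hv⟩ := hcorner
  have hp : (p : ℚ_[p]) ≠ 0 := by exact_mod_cast (Fact.out : p.Prime).ne_zero
  rw [affineChar_eq, affineChar_eq, ← AddChar.map_add_eq_mul]
  refine AddChar.map_eq_of_sub_eq_natCast_mul hψ (u + s ⟨n - 1, by omega⟩ * v) ?_
  rw [eq_add_of_sub_eq' hu, eq_add_of_sub_eq' hv]
  push_cast
  field_simp
  ring

end AffineChar

section Involution

variable {p : ℕ} [Fact p.Prime] {l : ℕ}

noncomputable def Jsign (p : ℕ) [Fact p.Prime] (l : ℕ) (i : Fin (2 * l)) : ℤ_[p] :=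
  if (i : ℕ) < l then 1 else -1

lemma Jsign_of_lt {i : Fin (2 * l)} (hi : (i : ℕ) < l) : Jsign p l i = 1 := if_pos hi

lemma Jsign_of_le {i : Fin (2 * l)} (hi : l ≤ (i : ℕ)) : Jsign p l i = -1 := if_neg (not_lt.2 hi)

lemma Jsign_mul_self (i : Fin (2 * l)) : Jsign p l i * Jsign p l i = 1 := by
  unfold Jsign
  split_ifs <;> norm_num

lemma Jsign_rev (i : Fin (2 * l)) : Jsign p l i.rev = -Jsign p l i := by
  rcases lt_or_ge (i : ℕ) l with hi | hi
  · rw [Jsign_of_lt hi, Jsign_of_le (by simp; omega)]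
  · rw [Jsign_of_le hi, Jsign_of_lt (by simp; omega), neg_neg]

lemma Jmat_apply (i j : Fin (2 * l)) : Jmat p l i j = if j = i.rev then Jsign p l i else 0 := by
  simp only [Jmat, Matrix.of_apply, Jsign, Fin.ext_iff, Fin.val_rev]
  exact if_congr (by omega) rfl rfl

lemma Jmat_mul_apply (A : Matrix (Fin (2 * l)) (Fin (2 * l)) ℤ_[p]) (i j : Fin (2 * l)) :
    (Jmat p l * A) i j = Jsign p l i * A i.rev j := by
  simp [Matrix.mul_apply, Jmat_apply]

lemma mul_Jmat_apply (A : Matrix (Fin (2 * l)) (Fin (2 * l)) ℤ_[p]) (i j : Fin (2 * l)) :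
    (A * Jmat p l) i j = -Jsign p l j * A i j.rev := by
  rw [Matrix.mul_apply, Fintype.sum_eq_single j.rev]
  · rw [Jmat_apply, Fin.rev_rev, if_pos rfl, Jsign_rev, mul_comm]
  · intro k hk
    rw [Jmat_apply, if_neg (fun h => hk (by rw [h, Fin.rev_rev])), mul_zero]

lemma Jmat_inv : (Jmat p l)⁻¹ = -Jmat p l := by
  refine Matrix.inv_eq_left_inv (Matrix.ext fun i j => ?_)
  rw [Matrix.neg_mul, Matrix.neg_apply, Jmat_mul_apply, Jmat_apply, Fin.rev_rev, Jsign_rev]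
  by_cases h : j = i
  · subst h
    rw [if_pos rfl, Matrix.one_apply_eq, mul_neg, neg_neg, Jsign_mul_self]
  · simp [h, Matrix.one_apply_ne (Ne.symm h)]

lemma thetaInv_apply (g : Matrix (Fin (2 * l)) (Fin (2 * l)) ℤ_[p]) (i j : Fin (2 * l)) :
    thetaInv p l g i j = Jsign p l i * Jsign p l j * g⁻¹ j.rev i.rev := by
  rw [thetaInv, Jmat_inv, mul_Jmat_apply, Matrix.neg_mul, Matrix.neg_apply, Jmat_mul_apply,
    Matrix.transpose_apply]
  ring

noncomputable def superdiagSign (p : ℕ) [Fact p.Prime] (l : ℕ) (i : Fin (2 * l - 1)) : ℤ_[p] :=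
  Jsign p l ⟨i, by omega⟩ * Jsign p l ⟨i + 1, by omega⟩

lemma superdiagSign_rev (i : Fin (2 * l - 1)) : superdiagSign p l i.rev = superdiagSign p l i := by
  rw [superdiagSign, superdiagSign, ← Fin.rev_superdiag_row, ← Fin.rev_superdiag_col, Jsign_rev,
    Jsign_rev, neg_mul_neg, mul_comm]

lemma superdiagSign_of_ne {i : Fin (2 * l - 1)} (hi : (i : ℕ) ≠ l - 1) :
    superdiagSign p l i = 1 := by
  rcases Nat.lt_or_gt_of_ne hi with hi | hi
  · rw [superdiagSign, Jsign_of_lt (by simp; omega), Jsign_of_lt (by simp; omega), one_mul]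
  · rw [superdiagSign, Jsign_of_le (by simp; omega), Jsign_of_le (by simp; omega), neg_mul_neg,
      one_mul]

lemma thetaInv_superdiag (g : Matrix (Fin (2 * l)) (Fin (2 * l)) ℤ_[p]) (i : Fin (2 * l - 1)) :
    superdiag (thetaInv p l g) i = superdiagSign p l i * superdiag g⁻¹ i.rev := by
  rw [superdiag, thetaInv_apply, superdiagSign, superdiag, Fin.rev_superdiag_row,
    Fin.rev_superdiag_col]

lemma thetaInv_corner (hl : 1 ≤ l) (g : Matrix (Fin (2 * l)) (Fin (2 * l)) ℤ_[p]) :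
    thetaInv p l g ⟨2 * l - 1, by omega⟩ ⟨0, by omega⟩ =
      -g⁻¹ ⟨2 * l - 1, by omega⟩ ⟨0, by omega⟩ := by
  have h₀ : (⟨0, by omega⟩ : Fin (2 * l)).rev = ⟨2 * l - 1, by omega⟩ := by ext; simp
  have h₁ : (⟨2 * l - 1, by omega⟩ : Fin (2 * l)).rev = ⟨0, by omega⟩ := by ext; simp; omega
  rw [thetaInv_apply, h₀, h₁, Jsign_of_le (by simp; omega), Jsign_of_lt (by simp; omega)]
  ring

end Involution

section Invariance

variable {p : ℕ} [Fact p.Prime] {l : ℕ}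

/-- Indices are 0-based: `thetaDefect s i` is the `d_{i+1}` of the sketch above. -/
noncomputable def thetaDefect (s : Fin (2 * l) → ℤ_[p]) (i : Fin (2 * l - 1)) : ℤ_[p] :=
  s ⟨i, by omega⟩ + superdiagSign p l i * s ⟨i.rev, by omega⟩

lemma sum_mul_superdiag_thetaInv (s : Fin (2 * l) → ℤ_[p])
    (g : Matrix (Fin (2 * l)) (Fin (2 * l)) ℤ_[p]) :
    ∑ i : Fin (2 * l - 1), s ⟨i, by omega⟩ * superdiag (thetaInv p l g) i =
      ∑ i : Fin (2 * l - 1), superdiagSign p l i * s ⟨i.rev, by omega⟩ * superdiag g⁻¹ i := by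
  rw [← Equiv.sum_comp Fin.revPerm]
  refine Finset.sum_congr rfl fun i _ => ?_
  rw [Fin.revPerm_apply, thetaInv_superdiag, Fin.rev_rev, superdiagSign_rev]
  ring

lemma affineChar_thetaInv (hl : 1 ≤ l) (ψ : AddChar ℚ_[p] ℂˣ)
    (hψ : ∀ x : ℤ_[p], ψ ((p : ℚ_[p]) * (x : ℚ_[p])) = 1) (s : Fin (2 * l) → ℤ_[p])
    {g : Matrix (Fin (2 * l)) (Fin (2 * l)) ℤ_[p]} (hg : IwahoriPlus p (2 * l) g) :
    affineChar p (2 * l) (Nat.mul_le_mul_left 2 hl) ψ s (thetaInv p l g) =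
      affineChar p (2 * l) (Nat.mul_le_mul_left 2 hl) ψ s g *
        ψ ((-∑ i : Fin (2 * l - 1), thetaDefect s i * superdiag g i : ℤ_[p]) : ℚ_[p]) := by
  refine affineChar_eq_mul_of_dvd (by omega) s hψ _ ?_ ?_
  · rw [sum_mul_superdiag_thetaInv]
    have h : ∑ i : Fin (2 * l - 1), superdiagSign p l i * s ⟨i.rev, by omega⟩ * superdiag g⁻¹ i -
        (∑ i : Fin (2 * l - 1), s ⟨i, by omega⟩ * superdiag g i +
          -∑ i : Fin (2 * l - 1), thetaDefect s i * superdiag g i) =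
        ∑ i : Fin (2 * l - 1), superdiagSign p l i * s ⟨i.rev, by omega⟩ *
          (superdiag g i + superdiag g⁻¹ i) := by
      simp only [thetaDefect, ← Finset.sum_neg_distrib, ← Finset.sum_add_distrib,
        ← Finset.sum_sub_distrib]
      exact Finset.sum_congr rfl fun i _ => by ring
    rw [h]
    exact Finset.dvd_sum fun i _ => dvd_mul_of_dvd_right (hg.dvd_superdiag_add_superdiag_inv i) _
  · rw [thetaInv_corner hl, sub_eq_add_neg, ← neg_add, dvd_neg, add_comm]
    exact hg.sq_dvd_corner_add_corner_inv (by omega)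

lemma affineChar_thetaInv_eq_iff_forall_dvd_thetaDefect (hl : 1 ≤ l) (ψ : AddChar ℚ_[p] ℂˣ)
    (hψ : ∀ x : ℤ_[p], ψ ((p : ℚ_[p]) * (x : ℚ_[p])) = 1) (hψ' : ∃ x : ℤ_[p], ψ (x : ℚ_[p]) ≠ 1)
    (s : Fin (2 * l) → ℤ_[p]) :
    (∀ g : Matrix (Fin (2 * l)) (Fin (2 * l)) ℤ_[p], IwahoriPlus p (2 * l) g →
      affineChar p (2 * l) (Nat.mul_le_mul_left 2 hl) ψ s (thetaInv p l g) =
        affineChar p (2 * l) (Nat.mul_le_mul_left 2 hl) ψ s g) ↔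
    ∀ i, (p : ℤ_[p]) ∣ thetaDefect s i := by
  constructor
  · intro H i
    let χ := ψ.compAddMonoidHom (PadicInt.Coe.ringHom : ℤ_[p] →+* ℚ_[p]).toAddMonoidHom
    have hχ : χ ≠ 1 := fun h => hψ'.elim fun x hx => hx (DFunLike.congr_fun h x)
    have hshift : χ.mulShift (-thetaDefect s i) = 1 := by
      ext1 x
      have hg : IwahoriPlus p (2 * l)
          (Matrix.transvection (⟨i, by omega⟩ : Fin (2 * l)) ⟨i + 1, by omega⟩ x) :=
        IwahoriPlus.transvection (Fin.lt_def.2 (Nat.lt_succ_self _)) x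
      have h := (affineChar_thetaInv hl ψ hψ s hg).symm.trans (H _ hg)
      show ψ ((-thetaDefect s i * x : ℤ_[p]) : ℚ_[p]) = 1
      simpa [superdiag_transvection] using h
    rw [← dvd_neg, ← Ideal.mem_span_singleton, ← PadicInt.maximalIdeal_eq_span_p]
    exact AddChar.mem_maximalIdeal_of_mulShift_eq_one hχ hshift
  · intro hdvd g hg
    obtain ⟨y, hy⟩ : (p : ℤ_[p]) ∣ -∑ i : Fin (2 * l - 1), thetaDefect s i * superdiag g i :=
      dvd_neg.2 (Finset.dvd_sum fun i _ => dvd_mul_of_dvd_left (hdvd i) _)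
    rw [affineChar_thetaInv hl ψ hψ s hg, hy, PadicInt.coe_mul, PadicInt.coe_natCast, hψ,
      mul_one]

variable (s : Fin (2 * l) → ℤ_[p])

lemma thetaDefect_of_ne {i : Fin (2 * l - 1)} (hi : (i : ℕ) ≠ l - 1) :
    thetaDefect s i = s ⟨i, by omega⟩ + s ⟨2 * l - 2 - i, by omega⟩ := by
  rw [thetaDefect, superdiagSign_of_ne hi, one_mul]
  congr 3
  simp only [Fin.val_rev]
  omega

lemma thetaDefect_of_eq {i : Fin (2 * l - 1)} (hi : (i : ℕ) = l - 1) : thetaDefect s i = 0 := by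
  have hrev : i.rev = i := Fin.ext (by simp only [Fin.val_rev]; omega)
  simp only [thetaDefect, superdiagSign, hrev]
  rw [Jsign_of_lt (by simp; omega), Jsign_of_le (by simp; omega)]
  ring

lemma forall_dvd_thetaDefect_iff :
    (∀ i, (p : ℤ_[p]) ∣ thetaDefect s i) ↔
      ∀ j : Fin (l - 1), (p : ℤ_[p]) ∣ s ⟨j, by omega⟩ + s ⟨2 * l - 2 - j, by omega⟩ := by
  refine ⟨fun h j => ?_, fun h i => ?_⟩
  · simpa only [thetaDefect_of_ne s (i := ⟨j, by omega⟩) (by simp; omega)] using h ⟨j, by omega⟩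
  rcases lt_trichotomy (i : ℕ) (l - 1) with hi | hi | hi
  · rw [thetaDefect_of_ne s hi.ne]
    exact h ⟨i, hi⟩
  · rw [thetaDefect_of_eq s hi]
    exact dvd_zero _
  · rw [thetaDefect_of_ne s hi.ne', add_comm]
    convert h ⟨2 * l - 2 - i, by omega⟩ using 4
    dsimp only
    omega

end Invariance

/-- For `ψ` trivial on `pℤ_p` but nontrivial on `ℤ_p`, the affine generic character `λ_s`
is `θ`-invariant on `I⁺` if and only if `s_i + s_{2l−i} ∈ pℤ_p` for all `1 ≤ i ≤ l−1`. -/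
theorem affineChar_theta_invariant_iff (p : ℕ) [Fact p.Prime] (l : ℕ) (hl : 1 ≤ l)
    (ψ : AddChar ℚ_[p] ℂˣ) (hψ : ∀ x : ℤ_[p], ψ ((p : ℚ_[p]) * (x : ℚ_[p])) = 1)
    (hψ' : ∃ x : ℤ_[p], ψ (x : ℚ_[p]) ≠ 1)
    (s : Fin (2 * l) → ℤ_[p]) :
    (∀ g : Matrix (Fin (2 * l)) (Fin (2 * l)) ℤ_[p], IwahoriPlus p (2 * l) g →
      affineChar p (2 * l) (by omega) ψ s (thetaInv p l g) =
        affineChar p (2 * l) (by omega) ψ s g) ↔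
    (∀ j : Fin (l - 1), (p : ℤ_[p]) ∣
      (s ⟨j, by have := j.isLt; omega⟩ + s ⟨2 * l - 2 - (j : ℕ), by omega⟩)) :=
  (affineChar_thetaInv_eq_iff_forall_dvd_thetaDefect hl ψ hψ hψ' s).trans
    (forall_dvd_thetaDefect_iff s)
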